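/- arXiv:1612.00354 — 2 statements merged into one kernel-verified Lean document; each statement's English description precedes it below -/
import Mathlib

section
/- The substitution p ↦ p·e^{pq}, q ↦ q·e^{-pq} defines a ℂ-algebra automorphism ψ of ℂ[[p,q]], with inverse given by p ↦ p·e^{-pq}, q ↦ q·e^{pq}. -/
open MvPowerSeries Finset

noncomputable section

abbrev R2 : Type := MvPowerSeries (Fin 2) ℂ

def pp : R2 := MvPowerSeries.X 0
def qq : R2 := MvPowerSeries.X 1

/-- The maximal ideal ⟨p,q⟩ of ℂ[[p,q]]. -/
def Ipq : Ideal R2 := Ideal.span {pp, qq}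

/-- ⟨p,q⟩-adic continuity of a self-map of ℂ[[p,q]]. -/
def AdicContinuous (φ : R2 → R2) : Prop :=
  ∀ n : ℕ, ∃ m : ℕ, ∀ F ∈ Ipq ^ m, φ F ∈ Ipq ^ n

/-- Substitution `F(p,q) ↦ F(f,g)` for `f, g` with vanishing constant term. -/
def subst2 (f g : R2) (F : R2) : R2 := fun e =>
  ∑ a ∈ Finset.range (e 0 + e 1 + 1), ∑ b ∈ Finset.range (e 0 + e 1 + 1),
    MvPowerSeries.coeff (Finsupp.single 0 a + Finsupp.single 1 b) F *
      MvPowerSeries.coeff e (f ^ a * g ^ b)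

/-- Formal exponential of a series with vanishing constant term (truncated sum). -/
def fexp0 (F : R2) : R2 := fun e =>
  ∑ k ∈ Finset.range (e 0 + e 1 + 1),
    ((Nat.factorial k : ℂ))⁻¹ * MvPowerSeries.coeff e (F ^ k)

/-- Formal exponential of an arbitrary series. -/
def fexp (F : R2) : R2 :=
  Complex.exp (MvPowerSeries.constantCoeff F) •
    fexp0 (F - MvPowerSeries.C (MvPowerSeries.constantCoeff F))

/-- Substitution of `pq` into a one-variable series `c(s)`. -/
def csubst (c : PowerSeries ℂ) : R2 := fun e =>
  if e 0 = e 1 then PowerSeries.coeff (e 0) c else 0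

/-- The linear part of an endomorphism of ℂ[[p,q]]: the matrix whose `j`-th column consists of
the coefficients of `p` and `q` in the image of the `j`-th variable. -/
def linPart (φ : R2 → R2) : Matrix (Fin 2) (Fin 2) ℂ :=
  Matrix.of fun i j => MvPowerSeries.coeff (Finsupp.single i 1) (φ (MvPowerSeries.X j))

def ee (i j : ℕ) : Fin 2 →₀ ℕ := Finsupp.single 0 i + Finsupp.single 1 j

@[simp] lemma ee_apply0 (i j : ℕ) : ee i j 0 = i := by simp [ee]
@[simp] lemma ee_apply1 (i j : ℕ) : ee i j 1 = j := by simp [ee]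

lemma eq_ee (e : Fin 2 →₀ ℕ) : e = ee (e 0) (e 1) := by
  ext i; fin_cases i <;> simp [ee]

lemma ee_inj {i j i' j' : ℕ} (h : ee i j = ee i' j') : i = i' ∧ j = j' := by
  constructor
  · have := congrArg (fun f => f 0) h; simpa using this
  · have := congrArg (fun f => f 1) h; simpa using this

@[simp] lemma ee_eq_ee_iff {i j i' j' : ℕ} : ee i j = ee i' j' ↔ i = i' ∧ j = j' := by
  constructor
  · exact ee_inj
  · rintro ⟨rfl, rfl⟩; rfl

lemma ee_le_iff {i j : ℕ} {e : Fin 2 →₀ ℕ} : ee i j ≤ e ↔ i ≤ e 0 ∧ j ≤ e 1 := by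
  constructor
  · intro h; exact ⟨by simpa using h 0, by simpa using h 1⟩
  · intro ⟨h1, h2⟩ s; fin_cases s <;> simpa

lemma ee_sub {i j a b : ℕ} : ee i j - ee a b = ee (i - a) (j - b) := by
  ext s; fin_cases s <;> simp [ee]

lemma coeff_mul2 (m n : ℕ) (F G : R2) :
    MvPowerSeries.coeff (ee m n) (F * G) =
      ∑ i ∈ range (m + 1), ∑ j ∈ range (n + 1),
        MvPowerSeries.coeff (ee i j) F * MvPowerSeries.coeff (ee (m - i) (n - j)) G := by
  rw [MvPowerSeries.coeff_mul, ← Finset.sum_product']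
  refine Finset.sum_nbij' (fun p => (p.1 0, p.1 1)) (fun x => (ee x.1 x.2, ee (m - x.1) (n - x.2)))
    ?_ ?_ ?_ ?_ ?_
  · intro p hp
    rw [Finset.HasAntidiagonal.mem_antidiagonal] at hp
    simp only [Finset.mem_product, Finset.mem_range]
    have h0 := congrArg (fun f => f 0) hp
    have h1 := congrArg (fun f => f 1) hp
    simp only [Finsupp.add_apply, ee_apply0, ee_apply1] at h0 h1
    omega
  · intro x hx
    simp only [Finset.mem_product, Finset.mem_range] at hx
    rw [Finset.HasAntidiagonal.mem_antidiagonal]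
    ext s; fin_cases s <;> simp <;> omega
  · intro p hp
    rw [Finset.HasAntidiagonal.mem_antidiagonal] at hp
    have h0 := congrArg (fun f => f 0) hp
    have h1 := congrArg (fun f => f 1) hp
    simp only [Finsupp.add_apply, ee_apply0, ee_apply1] at h0 h1
    have e2 : ee (m - p.1 0) (n - p.1 1) = p.2 := by
      rw [eq_ee p.2, ee_eq_ee_iff]; omega
    exact Prod.ext (eq_ee p.1).symm e2
  · intro x hx; simp
  · intro p hp
    rw [Finset.HasAntidiagonal.mem_antidiagonal] at hp
    have h0 := congrArg (fun f => f 0) hp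
    have h1 := congrArg (fun f => f 1) hp
    simp only [Finsupp.add_apply, ee_apply0, ee_apply1] at h0 h1
    have e2 : ee (m - p.1 0) (n - p.1 1) = p.2 := by
      rw [eq_ee p.2, ee_eq_ee_iff]; omega
    rw [← e2]
    conv_lhs => rw [eq_ee p.1]
    simp

lemma ee_zero : ee 0 0 = 0 := by ext s; fin_cases s <;> simp

lemma coeff_apply (F : R2) (e : Fin 2 →₀ ℕ) : MvPowerSeries.coeff e F = F e := rfl

/-- "e^{c·pq}" as an explicit series. -/
def Ec (c : ℂ) : R2 := fun e => if e 0 = e 1 then c ^ (e 0) / (e 0).factorial else 0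

/-- The operator F(p,q) ↦ F(p e^{c pq}, q e^{-c pq}), coefficientwise. -/
def Tc (c : ℂ) (F : R2) : R2 := fun e =>
  ∑ k ∈ range (min (e 0) (e 1) + 1),
    (c * ((e 0 : ℂ) - (e 1 : ℂ))) ^ k / (k.factorial : ℂ) * F (ee (e 0 - k) (e 1 - k))

lemma Tc_apply (c : ℂ) (F : R2) (m n : ℕ) :
    Tc c F (ee m n) = ∑ k ∈ range (min m n + 1),
      (c * ((m : ℂ) - (n : ℂ))) ^ k / (k.factorial : ℂ) * F (ee (m - k) (n - k)) := by
  simp [Tc]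

lemma binom_sum (x y : ℂ) (K : ℕ) :
    ∑ k ∈ range (K + 1), x ^ k * y ^ (K - k) / ((k.factorial : ℂ) * ((K - k).factorial : ℂ))
      = (x + y) ^ K / (K.factorial : ℂ) := by
  rw [add_pow, Finset.sum_div]
  refine Finset.sum_congr rfl fun k hk => ?_
  rw [Finset.mem_range] at hk
  have hkK : k ≤ K := by omega
  rw [Nat.cast_choose ℂ hkK]
  have h1 : (k.factorial : ℂ) ≠ 0 := Nat.cast_ne_zero.mpr k.factorial_ne_zero
  have h2 : ((K - k).factorial : ℂ) ≠ 0 := Nat.cast_ne_zero.mpr (K - k).factorial_ne_zero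
  have h3 : (K.factorial : ℂ) ≠ 0 := Nat.cast_ne_zero.mpr K.factorial_ne_zero
  field_simp


lemma Tc_add (c : ℂ) (F G : R2) : Tc c (F + G) = Tc c F + Tc c G := by
  funext e
  show _ = Tc c F e + Tc c G e
  simp only [Tc, ← Finset.sum_add_distrib]
  refine Finset.sum_congr rfl fun k _ => ?_
  show _ * (F _ + G _) = _
  ring

lemma Tc_smul (c a : ℂ) (F : R2) : Tc c (a • F) = a • Tc c F := by
  funext e
  show _ = a * Tc c F e
  simp only [Tc, Finset.mul_sum]
  refine Finset.sum_congr rfl fun k _ => ?_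
  show _ * (a * F _) = _
  ring

lemma one_apply' (i j : ℕ) : (1 : R2) (ee i j) = if i = 0 ∧ j = 0 then 1 else 0 := by
  rw [show (1 : R2) (ee i j) = MvPowerSeries.coeff (ee i j) 1 from rfl, MvPowerSeries.coeff_one]
  by_cases h : i = 0 ∧ j = 0
  · obtain ⟨rfl, rfl⟩ := h; rw [if_pos ee_zero, if_pos ⟨rfl, rfl⟩]
  · rw [if_neg, if_neg h]
    intro hc
    rw [← ee_zero, ee_eq_ee_iff] at hc
    exact h hc

lemma Tc_one (c : ℂ) : Tc c 1 = 1 := by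
  funext e
  conv_lhs => rw [eq_ee e]
  conv_rhs => rw [eq_ee e]
  generalize e 0 = m; generalize e 1 = n
  rw [Tc_apply]
  simp only [one_apply']
  by_cases hmn : m = n
  · subst hmn
    rw [Finset.sum_eq_single m ?h1 ?h2]
    · rcases Nat.eq_zero_or_pos m with rfl | hm
      · simp
      · rw [Nat.sub_self, if_pos ⟨rfl, rfl⟩, sub_self, mul_zero, zero_pow (by omega),
          zero_div, zero_mul, if_neg (by omega)]
    case h1 =>
      intro k hk hkm
      rw [Finset.mem_range] at hk
      rw [if_neg (by omega), mul_zero]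
    case h2 =>
      intro h; exact absurd (Finset.mem_range.mpr (by omega)) h
  · rw [Finset.sum_eq_zero, if_neg (by omega)]
    intro k hk
    rw [Finset.mem_range, Nat.lt_succ_iff, le_min_iff] at hk
    rw [if_neg (by omega), mul_zero]

lemma triangle (N : ℕ) (f : ℕ → ℕ → ℂ) :
    ∑ k ∈ range (N + 1), ∑ j ∈ range (N - k + 1), f k j
      = ∑ K ∈ range (N + 1), ∑ k ∈ range (K + 1), f k (K - k) := by
  rw [Finset.sum_sigma', Finset.sum_sigma']
  refine Finset.sum_nbij' (fun x => ⟨x.1 + x.2, x.1⟩) (fun x => ⟨x.2, x.1 - x.2⟩) ?_ ?_ ?_ ?_ ?_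
  · rintro ⟨a, b⟩ h
    simp only [Finset.mem_sigma, Finset.mem_range, Nat.lt_succ_iff] at h ⊢
    omega
  · rintro ⟨a, b⟩ h
    simp only [Finset.mem_sigma, Finset.mem_range, Nat.lt_succ_iff] at h ⊢
    omega
  · rintro ⟨a, b⟩ h
    simp only [Finset.mem_sigma, Finset.mem_range, Nat.lt_succ_iff] at h
    have hb : a + b - a = b := by omega
    simp [hb]
  · rintro ⟨a, b⟩ h
    simp only [Finset.mem_sigma, Finset.mem_range, Nat.lt_succ_iff] at h
    have hb : b + (a - b) = a := by omega
    simp [hb]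
  · rintro ⟨a, b⟩ h
    simp only [Finset.mem_sigma, Finset.mem_range, Nat.lt_succ_iff] at h
    simp only []
    congr 1
    omega

lemma Tc_comp (c c' : ℂ) (F : R2) : Tc c (Tc c' F) = Tc (c + c') F := by
  funext e
  conv_lhs => rw [eq_ee e]
  conv_rhs => rw [eq_ee e]
  generalize e 0 = m
  generalize e 1 = n
  rw [Tc_apply, Tc_apply]
  set w : ℂ := (m : ℂ) - (n : ℂ) with hw
  have step1 : ∀ k ∈ range (min m n + 1),
      (c * w) ^ k / (k.factorial : ℂ) * Tc c' F (ee (m - k) (n - k))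
        = ∑ j ∈ range (min m n - k + 1),
            (c * w) ^ k * (c' * w) ^ j / ((k.factorial : ℂ) * (j.factorial : ℂ))
              * F (ee (m - (k + j)) (n - (k + j))) := by
    intro k hk
    rw [Finset.mem_range, Nat.lt_succ_iff, le_min_iff] at hk
    rw [Tc_apply, Finset.mul_sum]
    have hmin : min (m - k) (n - k) = min m n - k := by omega
    rw [hmin]
    refine Finset.sum_congr rfl fun j hj => ?_
    have hcast : ((m - k : ℕ) : ℂ) - ((n - k : ℕ) : ℂ) = w := by
      rw [hw, Nat.cast_sub hk.1, Nat.cast_sub hk.2]; ring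
    rw [hcast, Nat.sub_sub, Nat.sub_sub]
    have h1 : (k.factorial : ℂ) ≠ 0 := Nat.cast_ne_zero.mpr k.factorial_ne_zero
    have h2 : (j.factorial : ℂ) ≠ 0 := Nat.cast_ne_zero.mpr j.factorial_ne_zero
    field_simp
  rw [Finset.sum_congr rfl step1, triangle]
  refine Finset.sum_congr rfl fun K hK => ?_
  have step2 : ∀ k ∈ range (K + 1),
      (c * w) ^ k * (c' * w) ^ (K - k) / ((k.factorial : ℂ) * ((K - k).factorial : ℂ))
        * F (ee (m - (k + (K - k))) (n - (k + (K - k))))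
      = (c * w) ^ k * (c' * w) ^ (K - k) / ((k.factorial : ℂ) * ((K - k).factorial : ℂ))
        * F (ee (m - K) (n - K)) := by
    intro k hk
    rw [Finset.mem_range, Nat.lt_succ_iff] at hk
    rw [Nat.add_sub_cancel' hk]
  rw [Finset.sum_congr rfl step2, ← Finset.sum_mul, binom_sum, ← add_mul]

lemma Tc_zero (F : R2) : Tc 0 F = F := by
  funext e
  conv_lhs => rw [eq_ee e]
  conv_rhs => rw [eq_ee e]
  rw [Tc_apply, Finset.sum_eq_single 0]
  · simp
  · intro k hk hk0
    rw [zero_mul, zero_pow hk0, zero_div, zero_mul]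
  · intro h
    exact absurd (Finset.mem_range.mpr (by omega)) h

lemma Tc_mul (c : ℂ) (F G : R2) : Tc c (F * G) = Tc c F * Tc c G := by
  funext e
  conv_lhs => rw [eq_ee e]
  conv_rhs => rw [eq_ee e]
  generalize e 0 = m
  generalize e 1 = n
  rw [Tc_apply,
    show (Tc c F * Tc c G) (ee m n) = MvPowerSeries.coeff (ee m n) (Tc c F * Tc c G) from rfl,
    coeff_mul2]
  simp only [MvPowerSeries.coeff_apply]
  have step1 : ∀ k ∈ range (min m n + 1),
      (c * ((m : ℂ) - (n : ℂ))) ^ k / (k.factorial : ℂ) * (F * G) (ee (m - k) (n - k))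
        = ∑ i ∈ range (m - k + 1), ∑ j ∈ range (n - k + 1), ∑ k1 ∈ range (k + 1),
            (c * ((i : ℂ) - (j : ℂ))) ^ k1 / (k1.factorial : ℂ)
              * ((c * (((m - k - i : ℕ) : ℂ) - ((n - k - j : ℕ) : ℂ))) ^ (k - k1)
                  / ((k - k1).factorial : ℂ))
              * (F (ee i j) * G (ee (m - k - i) (n - k - j))) := by
    intro k hk
    rw [Finset.mem_range, Nat.lt_succ_iff, le_min_iff] at hk
    rw [show (F * G) (ee (m - k) (n - k))
          = MvPowerSeries.coeff (ee (m - k) (n - k)) (F * G) from rfl,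
      coeff_mul2]
    simp only [MvPowerSeries.coeff_apply]
    rw [Finset.mul_sum]
    refine Finset.sum_congr rfl fun i hi => ?_
    rw [Finset.mul_sum]
    refine Finset.sum_congr rfl fun j hj => ?_
    rw [Finset.mem_range, Nat.lt_succ_iff] at hi hj
    have hw : c * ((m : ℂ) - (n : ℂ))
        = c * ((i : ℂ) - (j : ℂ)) + c * (((m - k - i : ℕ) : ℂ) - ((n - k - j : ℕ) : ℂ)) := by
      have h1 : ((m - k - i : ℕ) : ℂ) = (m : ℂ) - (k : ℂ) - (i : ℂ) := by
        rw [Nat.cast_sub hi, Nat.cast_sub hk.1]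
      have h2 : ((n - k - j : ℕ) : ℂ) = (n : ℂ) - (k : ℂ) - (j : ℂ) := by
        rw [Nat.cast_sub hj, Nat.cast_sub hk.2]
      rw [h1, h2]; ring
    rw [hw, ← binom_sum, Finset.sum_mul]
    refine Finset.sum_congr rfl fun k1 hk1 => ?_
    ring
  rw [Finset.sum_congr rfl step1]
  have step2 : ∀ a ∈ range (m + 1), ∀ b ∈ range (n + 1),
      Tc c F (ee a b) * Tc c G (ee (m - a) (n - b))
        = ∑ k1 ∈ range (min a b + 1), ∑ k2 ∈ range (min (m - a) (n - b) + 1),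
            ((c * ((a : ℂ) - (b : ℂ))) ^ k1 / (k1.factorial : ℂ) * F (ee (a - k1) (b - k1)))
              * ((c * (((m - a : ℕ) : ℂ) - ((n - b : ℕ) : ℂ))) ^ k2 / (k2.factorial : ℂ)
                  * G (ee (m - a - k2) (n - b - k2))) := by
    intro a _ b _
    rw [Tc_apply, Tc_apply, Finset.sum_mul_sum]
  rw [Finset.sum_congr rfl fun a ha => Finset.sum_congr rfl fun b hb => step2 a ha b hb]
  -- now both sides are 4-fold nested sums; flatten and bijection
  rw [show (∑ k ∈ range (min m n + 1), ∑ i ∈ range (m - k + 1), ∑ j ∈ range (n - k + 1),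
        ∑ k1 ∈ range (k + 1),
          (c * ((i : ℂ) - (j : ℂ))) ^ k1 / (k1.factorial : ℂ)
            * ((c * (((m - k - i : ℕ) : ℂ) - ((n - k - j : ℕ) : ℂ))) ^ (k - k1)
                / ((k - k1).factorial : ℂ))
            * (F (ee i j) * G (ee (m - k - i) (n - k - j))))
      = ∑ z ∈ (range (min m n + 1)).sigma
            (fun k => (range (m - k + 1) ×ˢ range (n - k + 1)) ×ˢ range (k + 1)),
          (c * ((z.2.1.1 : ℂ) - (z.2.1.2 : ℂ))) ^ z.2.2 / (z.2.2.factorial : ℂ)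
            * ((c * (((m - z.1 - z.2.1.1 : ℕ) : ℂ) - ((n - z.1 - z.2.1.2 : ℕ) : ℂ))) ^ (z.1 - z.2.2)
                / ((z.1 - z.2.2).factorial : ℂ))
            * (F (ee z.2.1.1 z.2.1.2) * G (ee (m - z.1 - z.2.1.1) (n - z.1 - z.2.1.2)))
      from by
        rw [Finset.sum_sigma]
        refine Finset.sum_congr rfl fun k _ => ?_
        rw [Finset.sum_product, Finset.sum_product]]
  rw [show (∑ a ∈ range (m + 1), ∑ b ∈ range (n + 1),
        ∑ k1 ∈ range (min a b + 1), ∑ k2 ∈ range (min (m - a) (n - b) + 1),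
          ((c * ((a : ℂ) - (b : ℂ))) ^ k1 / (k1.factorial : ℂ) * F (ee (a - k1) (b - k1)))
            * ((c * (((m - a : ℕ) : ℂ) - ((n - b : ℕ) : ℂ))) ^ k2 / (k2.factorial : ℂ)
                * G (ee (m - a - k2) (n - b - k2))))
      = ∑ z ∈ (range (m + 1) ×ˢ range (n + 1)).sigma
            (fun x => range (min x.1 x.2 + 1) ×ˢ range (min (m - x.1) (n - x.2) + 1)),
          ((c * ((z.1.1 : ℂ) - (z.1.2 : ℂ))) ^ z.2.1 / (z.2.1.factorial : ℂ)
              * F (ee (z.1.1 - z.2.1) (z.1.2 - z.2.1)))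
            * ((c * (((m - z.1.1 : ℕ) : ℂ) - ((n - z.1.2 : ℕ) : ℂ))) ^ z.2.2 / (z.2.2.factorial : ℂ)
                * G (ee (m - z.1.1 - z.2.2) (n - z.1.2 - z.2.2)))
      from by
        rw [Finset.sum_sigma, Finset.sum_product]
        refine Finset.sum_congr rfl fun a _ => Finset.sum_congr rfl fun b _ => ?_
        rw [Finset.sum_product]]
  refine Finset.sum_nbij' (fun z => ⟨(z.2.1.1 + z.2.2, z.2.1.2 + z.2.2), (z.2.2, z.1 - z.2.2)⟩)
    (fun z => ⟨z.2.1 + z.2.2, ((z.1.1 - z.2.1, z.1.2 - z.2.1), z.2.1)⟩) ?_ ?_ ?_ ?_ ?_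
  · rintro ⟨k, ⟨⟨i, j⟩, k1⟩⟩ hz
    simp only [Finset.mem_sigma, Finset.mem_product, Finset.mem_range, Nat.lt_succ_iff,
      le_min_iff] at hz ⊢
    omega
  · rintro ⟨⟨a, b⟩, ⟨k1, k2⟩⟩ hz
    simp only [Finset.mem_sigma, Finset.mem_product, Finset.mem_range, Nat.lt_succ_iff,
      le_min_iff] at hz ⊢
    omega
  · rintro ⟨k, ⟨⟨i, j⟩, k1⟩⟩ hz
    simp only [Finset.mem_sigma, Finset.mem_product, Finset.mem_range, Nat.lt_succ_iff,
      le_min_iff] at hz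
    simp only
    have h1 : k1 + (k - k1) = k := by omega
    have h2 : i + k1 - k1 = i := by omega
    have h3 : j + k1 - k1 = j := by omega
    simp [h1, h2, h3]
  · rintro ⟨⟨a, b⟩, ⟨k1, k2⟩⟩ hz
    simp only [Finset.mem_sigma, Finset.mem_product, Finset.mem_range, Nat.lt_succ_iff,
      le_min_iff] at hz
    simp only
    have h1 : a - k1 + k1 = a := by omega
    have h2 : b - k1 + k1 = b := by omega
    have h3 : k1 + k2 - k1 = k2 := by omega
    simp [h1, h2, h3]
  · rintro ⟨k, ⟨⟨i, j⟩, k1⟩⟩ hz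
    simp only [Finset.mem_sigma, Finset.mem_product, Finset.mem_range, Nat.lt_succ_iff,
      le_min_iff] at hz
    obtain ⟨hk, ⟨⟨hi, hj⟩, hk1⟩⟩ := hz
    simp only
    have e1 : i + k1 - k1 = i := by omega
    have e2 : j + k1 - k1 = j := by omega
    have e3 : m - (i + k1) - (k - k1) = m - k - i := by omega
    have e4 : n - (j + k1) - (k - k1) = n - k - j := by omega
    have e5 : m - (i + k1) = (m - k - i) + (k - k1) := by omega
    have e6 : n - (j + k1) = (n - k - j) + (k - k1) := by omega
    rw [e1, e2, e3, e4, e5, e6]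
    push_cast
    ring

lemma Ec_apply (x : ℂ) (i j : ℕ) : Ec x (ee i j) = if i = j then x ^ i / i.factorial else 0 := by
  simp [Ec]

lemma pq_pow (k : ℕ) : (pp * qq) ^ k = MvPowerSeries.monomial (ee k k) 1 := by
  rw [mul_pow, pp, qq, MvPowerSeries.X_pow_eq, MvPowerSeries.X_pow_eq,
    MvPowerSeries.monomial_mul_monomial, one_mul, ee]

lemma fexp_smul_pq (z : ℂ) : fexp (z • (pp * qq)) = Ec z := by
  have hc : MvPowerSeries.constantCoeff (z • (pp * qq)) = 0 := by
    have h1 : MvPowerSeries.constantCoeff (pp * qq) = 0 := by simp [pp, qq]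
    rw [MvPowerSeries.smul_eq_C_mul, map_mul, h1, mul_zero]
  rw [fexp, hc, Complex.exp_zero, map_zero, sub_zero, one_smul]
  funext e
  have hcoeff : ∀ k, MvPowerSeries.coeff e ((z • (pp * qq)) ^ k)
      = if e = ee k k then z ^ k else 0 := by
    intro k
    rw [smul_pow, pq_pow, LinearMap.map_smul, smul_eq_mul, MvPowerSeries.coeff_monomial]
    by_cases h : e = ee k k <;> simp [h]
  show ∑ k ∈ range (e 0 + e 1 + 1), ((k.factorial : ℂ))⁻¹ * MvPowerSeries.coeff e ((z • (pp * qq)) ^ k)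
      = Ec z e
  simp only [hcoeff]
  rw [show Ec z e = if e 0 = e 1 then z ^ (e 0) / (e 0).factorial else 0 from rfl]
  by_cases h : e 0 = e 1
  · have he : e = ee (e 0) (e 0) := by
      conv_lhs => rw [eq_ee e]
      rw [h]
    rw [if_pos h, Finset.sum_eq_single (e 0)]
    · rw [if_pos he]
      ring
    · intro k hk hkne
      rw [if_neg, mul_zero]
      intro hc2
      have := congrArg (fun f => f 0) hc2
      simp at this
      exact hkne this.symm
    · intro hnot
      exact absurd (Finset.mem_range.mpr (by omega)) hnot
  · rw [if_neg h, Finset.sum_eq_zero]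
    intro k hk
    rw [if_neg, mul_zero]
    intro hc2
    have h0 := congrArg (fun f => f 0) hc2
    have h1 := congrArg (fun f => f 1) hc2
    simp at h0 h1
    exact h (h0.trans h1.symm)

lemma Ec_mul (x y : ℂ) : Ec x * Ec y = Ec (x + y) := by
  funext e
  conv_lhs => rw [eq_ee e]
  conv_rhs => rw [eq_ee e]
  generalize e 0 = m
  generalize e 1 = n
  rw [show (Ec x * Ec y) (ee m n) = MvPowerSeries.coeff (ee m n) (Ec x * Ec y) from rfl,
    coeff_mul2]
  simp only [MvPowerSeries.coeff_apply]
  by_cases hmn : m = n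
  · subst hmn
    rw [Ec_apply, if_pos rfl]
    have collapse : ∀ i ∈ range (m + 1),
        ∑ j ∈ range (m + 1), Ec x (ee i j) * Ec y (ee (m - i) (m - j))
          = x ^ i * y ^ (m - i) / ((i.factorial : ℂ) * ((m - i).factorial : ℂ)) := by
      intro i hi
      rw [Finset.mem_range, Nat.lt_succ_iff] at hi
      rw [Finset.sum_eq_single i]
      · rw [Ec_apply, if_pos rfl, Ec_apply, if_pos rfl]
        ring
      · intro j hj hjne
        rw [Ec_apply, if_neg (fun h => hjne h.symm), zero_mul]
      · intro hnot
        exact absurd (Finset.mem_range.mpr (by omega)) hnot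
    rw [Finset.sum_congr rfl collapse, binom_sum]
  · rw [Ec_apply, if_neg hmn, Finset.sum_eq_zero]
    intro i hi
    rw [Finset.mem_range, Nat.lt_succ_iff] at hi
    rw [Finset.sum_eq_zero]
    intro j hj
    rw [Finset.mem_range, Nat.lt_succ_iff] at hj
    by_cases hij : i = j
    · subst hij
      rw [Ec_apply, Ec_apply, if_pos rfl, if_neg (by omega), mul_zero]
    · rw [Ec_apply, if_neg hij, zero_mul]

lemma Ec_zero : Ec 0 = 1 := by
  funext e
  conv_lhs => rw [eq_ee e]
  conv_rhs => rw [eq_ee e]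
  rw [Ec_apply, one_apply']
  by_cases h : e 0 = e 1
  · rw [if_pos h]
    rcases Nat.eq_zero_or_pos (e 0) with h0 | h0
    · rw [if_pos ⟨h0, by omega⟩, h0]
      simp
    · rw [if_neg (by omega), zero_pow (by omega), zero_div]
  · rw [if_neg h, if_neg (by omega)]

lemma Ec_pow (x : ℂ) (a : ℕ) : Ec x ^ a = Ec (a * x) := by
  induction a with
  | zero => simp [Ec_zero]
  | succ a ih =>
    rw [pow_succ, ih, Ec_mul]
    congr 1
    push_cast
    ring

lemma fg_pow (c : ℂ) (a b : ℕ) :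
    (pp * Ec c) ^ a * (qq * Ec (-c)) ^ b
      = MvPowerSeries.monomial (ee a b) 1 * Ec (c * ((a : ℂ) - (b : ℂ))) := by
  rw [mul_pow, mul_pow, pp, qq, MvPowerSeries.X_pow_eq, MvPowerSeries.X_pow_eq,
    Ec_pow, Ec_pow, show ∀ A B C D : R2, A * B * (C * D) = (A * C) * (B * D) from fun _ _ _ _ => by ring,
    MvPowerSeries.monomial_mul_monomial, one_mul, Ec_mul,
    show ((a : ℂ) * c + (b : ℂ) * -c) = c * ((a : ℂ) - (b : ℂ)) from by ring]
  rfl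

lemma coeff_fg_pow (c : ℂ) (a b m n : ℕ) :
    MvPowerSeries.coeff (ee m n) ((pp * Ec c) ^ a * (qq * Ec (-c)) ^ b)
      = if a ≤ m ∧ b ≤ n ∧ m - a = n - b
          then (c * ((a : ℂ) - (b : ℂ))) ^ (m - a) / ((m - a).factorial : ℂ) else 0 := by
  rw [fg_pow, MvPowerSeries.coeff_monomial_mul]
  have hle : ee a b ≤ ee m n ↔ a ≤ m ∧ b ≤ n := by rw [ee_le_iff]; simp
  by_cases h : a ≤ m ∧ b ≤ n
  · rw [if_pos (hle.mpr h), ee_sub, one_mul, MvPowerSeries.coeff_apply, Ec_apply]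
    by_cases h2 : m - a = n - b
    · rw [if_pos h2, if_pos ⟨h.1, h.2, h2⟩]
    · rw [if_neg h2, if_neg (by tauto)]
  · rw [if_neg (fun hc => h (hle.mp hc)), if_neg (by tauto)]

lemma ee_one0 : ee 1 0 = Finsupp.single 0 1 := by rw [ee, Finsupp.single_zero, add_zero]
lemma ee_zero1 : ee 0 1 = Finsupp.single 1 1 := by rw [ee, Finsupp.single_zero, zero_add]

lemma subst2_eq (c : ℂ) (F : R2) : subst2 (pp * Ec c) (qq * Ec (-c)) F = Tc c F := by
  funext e
  obtain ⟨m, n, rfl⟩ : ∃ m n, e = ee m n := ⟨e 0, e 1, eq_ee e⟩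
  simp only [subst2, ee_apply0, ee_apply1]
  rw [Tc_apply]
  simp only [coeff_fg_pow]
  rw [← Finset.sum_product']
  refine Finset.sum_bij_ne_zero (fun x _ _ => m - x.1) ?_ ?_ ?_ ?_
  · rintro ⟨a, b⟩ h₁ h₂
    simp only [Finset.mem_product, Finset.mem_range] at h₁
    simp only [Finset.mem_range, Nat.lt_succ_iff, le_min_iff]
    by_contra hc
    exact h₂ (by rw [if_neg (by omega), mul_zero])
  · rintro ⟨a₁, b₁⟩ h₁₁ h₁₂ ⟨a₂, b₂⟩ h₂₁ h₂₂ hii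
    simp only [Finset.mem_product, Finset.mem_range] at h₁₁ h₂₁
    have hc1 : a₁ ≤ m ∧ b₁ ≤ n ∧ m - a₁ = n - b₁ := by
      by_contra hc
      exact h₁₂ (by rw [if_neg hc, mul_zero])
    have hc2 : a₂ ≤ m ∧ b₂ ≤ n ∧ m - a₂ = n - b₂ := by
      by_contra hc
      exact h₂₂ (by rw [if_neg hc, mul_zero])
    simp only at hii
    have : a₁ = a₂ := by omega
    have : b₁ = b₂ := by omega
    simp_all
  · intro k hk hgk
    rw [Finset.mem_range, Nat.lt_succ_iff, le_min_iff] at hk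
    refine ⟨(m - k, n - k), ?_, ?_, ?_⟩
    · simp only [Finset.mem_product, Finset.mem_range]
      omega
    · have hcond : m - k ≤ m ∧ n - k ≤ n ∧ m - (m - k) = n - (n - k) := by omega
      rw [if_pos hcond]
      intro hzero
      apply hgk
      have e1 : m - (m - k) = k := by omega
      have e2 : n - (n - k) = k := by omega
      have hw : c * (((m - k : ℕ) : ℂ) - ((n - k : ℕ) : ℂ)) = c * ((m : ℂ) - (n : ℂ)) := by
        rw [Nat.cast_sub hk.1, Nat.cast_sub hk.2]; ring
      rw [e1, hw] at hzero
      rw [show F (ee (m - k) (n - k))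
            = MvPowerSeries.coeff (Finsupp.single 0 (m - k) + Finsupp.single 1 (n - k)) F
          from rfl]
      calc (c * ((m : ℂ) - n)) ^ k / (k.factorial : ℂ)
            * MvPowerSeries.coeff (Finsupp.single 0 (m - k) + Finsupp.single 1 (n - k)) F
          = MvPowerSeries.coeff (Finsupp.single 0 (m - k) + Finsupp.single 1 (n - k)) F
            * ((c * ((m : ℂ) - n)) ^ k / (k.factorial : ℂ)) := by ring
        _ = 0 := hzero
    · simp only
      omega
  · rintro ⟨a, b⟩ h₁ h₂
    simp only [Finset.mem_product, Finset.mem_range] at h₁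
    have hcond : a ≤ m ∧ b ≤ n ∧ m - a = n - b := by
      by_contra hc
      exact h₂ (by rw [if_neg hc, mul_zero])
    obtain ⟨ha, hb, hab⟩ := hcond
    simp only
    rw [if_pos ⟨ha, hb, hab⟩]
    have e1 : m - (m - a) = a := by omega
    have e2 : n - (m - a) = b := by omega
    rw [e1, e2]
    have hw : c * ((a : ℂ) - (b : ℂ)) = c * ((m : ℂ) - (n : ℂ)) := by
      have : m + b = n + a := by omega
      have hcast : (m : ℂ) + b = (n : ℂ) + a := by exact_mod_cast congrArg (Nat.cast : ℕ → ℂ) this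
      have : (a : ℂ) - b = (m : ℂ) - n := by linear_combination -hcast
      rw [this]
    rw [hab, hw,
      show F (ee a b) = MvPowerSeries.coeff (Finsupp.single 0 a + Finsupp.single 1 b) F from rfl]
    rw [← hab]
    ring

lemma pp_apply' (i j : ℕ) : pp (ee i j) = if i = 1 ∧ j = 0 then 1 else 0 := by
  rw [show pp (ee i j) = MvPowerSeries.coeff (ee i j) pp from rfl, pp, MvPowerSeries.coeff_X]
  by_cases h : i = 1 ∧ j = 0
  · obtain ⟨rfl, rfl⟩ := h
    rw [if_pos ee_one0, if_pos ⟨rfl, rfl⟩]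
  · rw [if_neg, if_neg h]
    intro hc
    rw [← ee_one0, ee_eq_ee_iff] at hc
    exact h hc

lemma qq_apply' (i j : ℕ) : qq (ee i j) = if i = 0 ∧ j = 1 then 1 else 0 := by
  rw [show qq (ee i j) = MvPowerSeries.coeff (ee i j) qq from rfl, qq, MvPowerSeries.coeff_X]
  by_cases h : i = 0 ∧ j = 1
  · obtain ⟨rfl, rfl⟩ := h
    rw [if_pos ee_zero1, if_pos ⟨rfl, rfl⟩]
  · rw [if_neg, if_neg h]
    intro hc
    rw [← ee_zero1, ee_eq_ee_iff] at hc
    exact h hc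

lemma coeff_pp_mul (x : ℂ) (m n : ℕ) :
    (pp * Ec x) (ee m n) = if 1 ≤ m ∧ m - 1 = n then x ^ n / (n.factorial : ℂ) else 0 := by
  rw [show (pp * Ec x) (ee m n) = MvPowerSeries.coeff (ee m n) (pp * Ec x) from rfl,
    show pp = MvPowerSeries.monomial (Finsupp.single 0 1) 1 from rfl, ← ee_one0,
    MvPowerSeries.coeff_monomial_mul]
  have hle : ee 1 0 ≤ ee m n ↔ 1 ≤ m ∧ 0 ≤ n := by rw [ee_le_iff]; simp
  by_cases h : 1 ≤ m
  · rw [if_pos (hle.mpr ⟨h, Nat.zero_le n⟩), ee_sub, one_mul, Nat.sub_zero,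
      MvPowerSeries.coeff_apply, Ec_apply]
    by_cases h2 : m - 1 = n
    · rw [if_pos h2, if_pos ⟨h, h2⟩, h2]
    · rw [if_neg h2, if_neg (by tauto)]
  · rw [if_neg (fun hc => h (hle.mp hc).1), if_neg (by tauto)]

lemma coeff_qq_mul (x : ℂ) (m n : ℕ) :
    (qq * Ec x) (ee m n) = if 1 ≤ n ∧ n - 1 = m then x ^ m / (m.factorial : ℂ) else 0 := by
  rw [show (qq * Ec x) (ee m n) = MvPowerSeries.coeff (ee m n) (qq * Ec x) from rfl,
    show qq = MvPowerSeries.monomial (Finsupp.single 1 1) 1 from rfl, ← ee_zero1,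
    MvPowerSeries.coeff_monomial_mul]
  have hle : ee 0 1 ≤ ee m n ↔ 0 ≤ m ∧ 1 ≤ n := by rw [ee_le_iff]; simp
  by_cases h : 1 ≤ n
  · rw [if_pos (hle.mpr ⟨Nat.zero_le m, h⟩), ee_sub, one_mul, Nat.sub_zero,
      MvPowerSeries.coeff_apply, Ec_apply]
    by_cases h2 : n - 1 = m
    · rw [if_pos h2.symm, if_pos ⟨h, h2⟩]
    · rw [if_neg (fun hc => h2 hc.symm), if_neg (by tauto)]
  · rw [if_neg (fun hc => h (hle.mp hc).2), if_neg (by tauto)]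

lemma Tc_pp (x : ℂ) : Tc x pp = pp * Ec x := by
  funext e
  obtain ⟨m, n, rfl⟩ : ∃ m n, e = ee m n := ⟨e 0, e 1, eq_ee e⟩
  rw [Tc_apply, coeff_pp_mul]
  simp only [pp_apply']
  by_cases h : m = n + 1
  · subst h
    rw [if_pos ⟨by omega, by omega⟩, Finset.sum_eq_single n]
    · rw [if_pos ⟨by omega, by omega⟩, mul_one]
      have hw : x * (((n + 1 : ℕ) : ℂ) - (n : ℂ)) = x := by push_cast; ring
      rw [hw]
    · intro k hk hkne
      rw [Finset.mem_range, Nat.lt_succ_iff, le_min_iff] at hk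
      rw [if_neg (by omega), mul_zero]
    · intro hnot
      exact absurd (Finset.mem_range.mpr (by omega)) hnot
  · rw [if_neg (by omega), Finset.sum_eq_zero]
    intro k hk
    rw [Finset.mem_range, Nat.lt_succ_iff, le_min_iff] at hk
    rw [if_neg (by omega), mul_zero]

lemma Tc_qq (x : ℂ) : Tc x qq = qq * Ec (-x) := by
  funext e
  obtain ⟨m, n, rfl⟩ : ∃ m n, e = ee m n := ⟨e 0, e 1, eq_ee e⟩
  rw [Tc_apply, coeff_qq_mul]
  simp only [qq_apply']
  by_cases h : n = m + 1
  · subst h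
    rw [if_pos ⟨by omega, by omega⟩, Finset.sum_eq_single m]
    · rw [if_pos ⟨by omega, by omega⟩, mul_one]
      have hw : x * ((m : ℂ) - ((m + 1 : ℕ) : ℂ)) = -x := by push_cast; ring
      rw [hw]
    · intro k hk hkne
      rw [Finset.mem_range, Nat.lt_succ_iff, le_min_iff] at hk
      rw [if_neg (by omega), mul_zero]
    · intro hnot
      exact absurd (Finset.mem_range.mpr (by omega)) hnot
  · rw [if_neg (by omega), Finset.sum_eq_zero]
    intro k hk
    rw [Finset.mem_range, Nat.lt_succ_iff, le_min_iff] at hk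
    rw [if_neg (by omega), mul_zero]
end

/-- the substitution p ↦ p·e^{pq}, q ↦ q·e^{-pq} defines a ℂ-algebra automorphism of
ℂ[[p,q]] with inverse given by the substitution p ↦ p·e^{-pq}, q ↦ q·e^{pq}. -/
theorem stmt2 :
    ∃ ψ : R2 ≃ₐ[ℂ] R2,
      ψ pp = pp * fexp (pp * qq) ∧ ψ qq = qq * fexp (-(pp * qq)) ∧
      (∀ F, ψ F = subst2 (pp * fexp (pp * qq)) (qq * fexp (-(pp * qq))) F) ∧
      ψ.symm pp = pp * fexp (-(pp * qq)) ∧ ψ.symm qq = qq * fexp (pp * qq) ∧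
      (∀ F, ψ.symm F = subst2 (pp * fexp (-(pp * qq))) (qq * fexp (pp * qq)) F) := by
  have hfe1 : fexp (pp * qq) = Ec 1 := by
    have := fexp_smul_pq 1
    rwa [one_smul] at this
  have hfe2 : fexp (-(pp * qq)) = Ec (-1) := by
    have := fexp_smul_pq (-1)
    rwa [neg_smul, one_smul] at this
  refine ⟨{ toFun := Tc 1, invFun := Tc (-1),
            left_inv := fun F => by
              show Tc (-1) (Tc 1 F) = F
              rw [Tc_comp, show (-1 + 1 : ℂ) = 0 from by norm_num, Tc_zero],
            right_inv := fun F => by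
              show Tc 1 (Tc (-1) F) = F
              rw [Tc_comp, show (1 + -1 : ℂ) = 0 from by norm_num, Tc_zero],
            map_mul' := Tc_mul 1, map_add' := Tc_add 1,
            commutes' := fun a => by
              show Tc 1 (algebraMap ℂ R2 a) = algebraMap ℂ R2 a
              rw [Algebra.algebraMap_eq_smul_one, Tc_smul, Tc_one] }, ?_, ?_, ?_, ?_, ?_, ?_⟩
  · show Tc 1 pp = pp * fexp (pp * qq)
    rw [hfe1, Tc_pp]
  · show Tc 1 qq = qq * fexp (-(pp * qq))
    rw [hfe2, Tc_qq]
  · intro F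
    show Tc 1 F = _
    rw [hfe1, hfe2, subst2_eq]
  · show Tc (-1) pp = pp * fexp (-(pp * qq))
    rw [hfe2, Tc_pp]
  · show Tc (-1) qq = qq * fexp (pp * qq)
    rw [hfe1, Tc_qq, neg_neg]
  · intro F
    show Tc (-1) F = _
    rw [hfe1, hfe2, show Ec 1 = Ec (-(-1)) from by norm_num, subst2_eq]
end

section
/- The formal automorphisms ψ : (p,q) ↦ (p·e^{pq}, q·e^{-pq}) and m : (p,q) ↦ (p(1−pq), q(1−pq)^{-1}) of ℂ[[p,q]] are conjugate in the group of continuous ℂ-algebra automorphisms of ℂ[[p,q]] preserving the maximal ideal: there exists such an automorphism σ with σ⁻¹ ∘ ψ ∘ σ = m. -/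
open MvPowerSeries Finset

noncomputable section Aux
open MvPowerSeries Finset

-- ### exponent helpers

def m2 (i j : ℕ) : Fin 2 →₀ ℕ := Finsupp.single 0 i + Finsupp.single 1 j

@[simp] lemma m2_apply0 (i j : ℕ) : m2 i j 0 = i := by
  simp [m2, Finsupp.single_apply]

@[simp] lemma m2_apply1 (i j : ℕ) : m2 i j 1 = j := by
  simp [m2, Finsupp.single_apply]

lemma eq_m2 (e : Fin 2 →₀ ℕ) : e = m2 (e 0) (e 1) := by
  ext a; fin_cases a <;> simp [m2, Finsupp.single_apply]

lemma m2_inj {a b c d : ℕ} : m2 a b = m2 c d ↔ a = c ∧ b = d := by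
  constructor
  · intro h
    constructor
    · have := congrArg (fun f => f 0) h; simpa using this
    · have := congrArg (fun f => f 1) h; simpa using this
  · rintro ⟨rfl, rfl⟩; rfl

lemma m2_add (a b c d : ℕ) : m2 a b + m2 c d = m2 (a+c) (b+d) := by
  ext x; fin_cases x <;> simp

@[simp] lemma m2_zero : m2 0 0 = 0 := by
  ext x; fin_cases x <;> simp

lemma m2_le_iff {a b : ℕ} {e : Fin 2 →₀ ℕ} : m2 a b ≤ e ↔ a ≤ e 0 ∧ b ≤ e 1 := by
  rw [Finsupp.le_def]
  constructor
  · intro h; exact ⟨by simpa using h 0, by simpa using h 1⟩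
  · rintro ⟨h0, h1⟩ x; fin_cases x <;> simpa

lemma sub_m2_apply0 (e : Fin 2 →₀ ℕ) (a b : ℕ) : (e - m2 a b) 0 = e 0 - a := by
  simp [Finsupp.tsub_apply]

lemma sub_m2_apply1 (e : Fin 2 →₀ ℕ) (a b : ℕ) : (e - m2 a b) 1 = e 1 - b := by
  simp [Finsupp.tsub_apply]

-- monomial facts

lemma pp_pow_qq_pow (a b : ℕ) : pp ^ a * qq ^ b = monomial (m2 a b) 1 := by
  rw [pp, qq, X_pow_eq, X_pow_eq, monomial_mul_monomial, one_mul, m2]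

lemma pp_eq : pp = monomial (m2 1 0) 1 := by
  have := pp_pow_qq_pow 1 0; simpa using this

lemma qq_eq : qq = monomial (m2 0 1) 1 := by
  have := pp_pow_qq_pow 0 1; simpa using this

lemma ppqq_eq : pp * qq = monomial (m2 1 1) 1 := by
  have := pp_pow_qq_pow 1 1; simpa using this

lemma ppqq_pow (k : ℕ) : (pp * qq) ^ k = monomial (m2 k k) 1 := by
  rw [mul_pow, pp_pow_qq_pow]

-- ### order predicate

def inI (n : ℕ) (F : R2) : Prop := ∀ e : Fin 2 →₀ ℕ, e 0 + e 1 < n → coeff e F = 0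

lemma inI_add {n : ℕ} {F G : R2} (hF : inI n F) (hG : inI n G) : inI n (F + G) := by
  intro e he; rw [map_add, hF e he, hG e he, add_zero]

lemma inI_sub {n : ℕ} {F G : R2} (hF : inI n F) (hG : inI n G) : inI n (F - G) := by
  intro e he; rw [map_sub, hF e he, hG e he, sub_zero]

lemma inI_mul_right {n : ℕ} (A : R2) {B : R2} (hB : inI n B) : inI n (A * B) := by
  intro e he
  rw [coeff_mul]
  refine Finset.sum_eq_zero fun p hp => ?_
  have hpe : p.1 + p.2 = e := Finset.HasAntidiagonal.mem_antidiagonal.mp hp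
  have h2 : p.2 0 + p.2 1 < n := by
    have h0 : p.1 0 + p.2 0 = e 0 := by rw [← hpe]; simp
    have h1 : p.1 1 + p.2 1 = e 1 := by rw [← hpe]; simp
    omega
  rw [hB p.2 h2, mul_zero]

lemma inI_mul_left {n : ℕ} {A : R2} (hA : inI n A) (B : R2) : inI n (A * B) := by
  rw [mul_comm]; exact inI_mul_right B hA

lemma constantCoeff_of_mem_Ipq {F : R2} (hF : F ∈ Ipq) :
    MvPowerSeries.constantCoeff F = 0 := by
  have : Ipq ≤ Ideal.comap (MvPowerSeries.constantCoeff) ⊥ := by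
    rw [Ipq, Ideal.span_le]
    rintro x (rfl | rfl) <;>
      simp [Ideal.mem_comap, pp, qq, MvPowerSeries.constantCoeff_X]
  simpa using this hF

/-- L1: membership in `Ipq ^ n` forces vanishing of low coefficients. -/
lemma inI_of_mem_pow : ∀ (n : ℕ) (F : R2), F ∈ Ipq ^ n → inI n F := by
  intro n
  induction n with
  | zero => intro F _ e he; omega
  | succ n ih =>
    intro F hF
    rw [pow_succ] at hF
    refine Submodule.mul_induction_on hF ?_ ?_
    · intro a ha b hb e he
      rw [coeff_mul]
      refine Finset.sum_eq_zero fun p hp => ?_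
      have hpe : p.1 + p.2 = e := Finset.HasAntidiagonal.mem_antidiagonal.mp hp
      have h0 : p.1 0 + p.2 0 = e 0 := by rw [← hpe]; simp
      have h1 : p.1 1 + p.2 1 = e 1 := by rw [← hpe]; simp
      by_cases hd : p.1 0 + p.1 1 < n
      · rw [ih a ha p.1 hd, zero_mul]
      · have hz : p.2 = 0 := by
          have : p.2 0 + p.2 1 = 0 := by omega
          have h20 : p.2 0 = 0 := by omega
          have h21 : p.2 1 = 0 := by omega
          ext x
          fin_cases x
          · simpa using h20
          · simpa using h21
        have : coeff p.2 b = 0 := by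
          rw [hz]
          simpa [MvPowerSeries.coeff_zero_eq_constantCoeff] using constantCoeff_of_mem_Ipq hb
        rw [this, mul_zero]
    · intro x y hx hy e he
      rw [map_add, hx e he, hy e he, add_zero]

lemma pp_mem_Ipq : pp ∈ Ipq := Ideal.subset_span (by simp)
lemma qq_mem_Ipq : qq ∈ Ipq := Ideal.subset_span (by simp)

/-- L2: a series whose coefficients vanish below total degree `n` lies in `Ipq ^ n`. -/
lemma mem_pow_of_inI {n : ℕ} {F : R2} (hF : inI n F) : F ∈ Ipq ^ n := by
  classical
  -- decompose F = ∑_{i ≤ n} pp^i qq^(n-i) * G i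
  set G : ℕ → R2 := fun i e =>
    if min (e 0 + i) n = i then coeff (e + m2 i (n - i)) F else 0 with hG
  have hGcoeff : ∀ i d, coeff d (G i)
      = if min (d 0 + i) n = i then coeff (d + m2 i (n - i)) F else 0 := fun i d => rfl
  have key : F = ∑ i ∈ range (n+1), monomial (m2 i (n-i)) 1 * G i := by
    ext e
    rw [map_sum]
    have hterm : ∀ i, coeff e (monomial (m2 i (n-i)) 1 * G i)
        = if m2 i (n-i) ≤ e then (1 : ℂ) * coeff (e - m2 i (n-i)) (G i) else 0 :=
      fun i => by rw [coeff_monomial_mul]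
    by_cases hdeg : e 0 + e 1 < n
    · rw [hF e hdeg]
      refine (Finset.sum_eq_zero fun i hi => ?_).symm
      rw [hterm i]
      split_ifs with hle
      · have h0 : i ≤ e 0 := (m2_le_iff.mp hle).1
        have h1 : n - i ≤ e 1 := (m2_le_iff.mp hle).2
        have hi' : i ≤ n := by simpa [Nat.lt_succ_iff] using hi
        omega
      · rfl
    · push_neg at hdeg
      set i₀ := min (e 0) n with hi₀
      have hi₀mem : i₀ ∈ range (n+1) := by simp [hi₀, Nat.lt_succ_iff]
      rw [Finset.sum_eq_single i₀]
      · rw [hterm i₀]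
        have hle : m2 i₀ (n - i₀) ≤ e := by
          rw [m2_le_iff]; constructor <;> omega
        rw [if_pos hle, one_mul, hGcoeff]
        have he0 : (e - m2 i₀ (n - i₀)) 0 = e 0 - i₀ := sub_m2_apply0 e _ _
        have hc : min ((e - m2 i₀ (n - i₀)) 0 + i₀) n = i₀ := by rw [he0]; omega
        rw [if_pos hc]
        rw [tsub_add_cancel_of_le hle]
      · intro i hi hne
        rw [hterm i]
        split_ifs with hle
        · have h0 : i ≤ e 0 := (m2_le_iff.mp hle).1
          have he0 : (e - m2 i (n-i)) 0 = e 0 - i := sub_m2_apply0 e _ _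
          have hc : ¬ (min ((e - m2 i (n-i)) 0 + i) n = i) := by rw [he0]; omega
          rw [one_mul, hGcoeff, if_neg hc]
        · rfl
      · intro h; exact absurd hi₀mem h
  rw [key]
  refine Ideal.sum_mem _ fun i hi => ?_
  have hi' : i ≤ n := by simpa [Nat.lt_succ_iff] using hi
  have hmon : monomial (m2 i (n-i)) 1 ∈ Ipq ^ n := by
    rw [← pp_pow_qq_pow]
    have h1 : pp ^ i ∈ Ipq ^ i := Ideal.pow_mem_pow pp_mem_Ipq i
    have h2 : qq ^ (n-i) ∈ Ipq ^ (n-i) := Ideal.pow_mem_pow qq_mem_Ipq (n-i)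
    have := Ideal.mul_mem_mul h1 h2
    rwa [← pow_add, Nat.add_sub_cancel' hi'] at this
  exact Ideal.mul_mem_right _ _ hmon




lemma csubst_coeff (c : PowerSeries ℂ) (e : Fin 2 →₀ ℕ) :
    coeff e (csubst c) = if e 0 = e 1 then PowerSeries.coeff (e 0) c else 0 := rfl

lemma csubst_coeff_m2 (c : PowerSeries ℂ) (i j : ℕ) :
    coeff (m2 i j) (csubst c) = if i = j then PowerSeries.coeff i c else 0 := by
  rw [csubst_coeff]; simp

lemma coeff_mul_m2 (F G : R2) (i j : ℕ) :
    coeff (m2 i j) (F * G) =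
      ∑ x ∈ Finset.HasAntidiagonal.antidiagonal i, ∑ y ∈ Finset.HasAntidiagonal.antidiagonal j,
        coeff (m2 x.1 y.1) F * coeff (m2 x.2 y.2) G := by
  rw [coeff_mul, ← Finset.sum_product']
  refine Finset.sum_nbij' (fun p => ((p.1 0, p.2 0), (p.1 1, p.2 1)))
    (fun z => (m2 z.1.1 z.2.1, m2 z.1.2 z.2.2)) ?_ ?_ ?_ ?_ ?_
  · intro p hp
    have hpe := Finset.HasAntidiagonal.mem_antidiagonal.mp hp
    have h0 : p.1 0 + p.2 0 = m2 i j 0 := by rw [← hpe]; simp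
    have h1 : p.1 1 + p.2 1 = m2 i j 1 := by rw [← hpe]; simp
    simp only [m2_apply0, m2_apply1] at h0 h1
    simp only [Finset.mem_product, Finset.HasAntidiagonal.mem_antidiagonal]
    exact ⟨h0, h1⟩
  · intro z hz
    simp only [Finset.mem_product, Finset.HasAntidiagonal.mem_antidiagonal] at hz
    rw [Finset.HasAntidiagonal.mem_antidiagonal, m2_add, hz.1, hz.2]
  · intro p hp
    ext x <;> (fin_cases x)
    · simp
    · simp
    · simp
    · simp
  · intro z hz
    simp
  · intro p hp
    rw [← eq_m2 p.1, ← eq_m2 p.2]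

lemma csubst_mul (a b : PowerSeries ℂ) : csubst (a * b) = csubst a * csubst b := by
  ext e
  rw [eq_m2 e, coeff_mul_m2, csubst_coeff_m2]
  by_cases hij : e 0 = e 1
  · rw [if_pos hij, PowerSeries.coeff_mul, ← hij]
    refine Eq.symm (Finset.sum_congr rfl fun x hx => ?_)
    have hx' : x.1 + x.2 = e 0 := Finset.HasAntidiagonal.mem_antidiagonal.mp hx
    rw [Finset.sum_eq_single x]
    · rw [csubst_coeff_m2, csubst_coeff_m2, if_pos rfl, if_pos rfl]
    · intro y hy hne
      have hy' : y.1 + y.2 = e 0 := Finset.HasAntidiagonal.mem_antidiagonal.mp hy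
      rw [csubst_coeff_m2, csubst_coeff_m2]
      by_cases h1 : x.1 = y.1
      · have h2 : ¬ (x.2 = y.2) := fun h2 => hne (Prod.ext h1.symm h2.symm)
        rw [if_neg h2, mul_zero]
      · rw [if_neg h1, zero_mul]
    · intro hx0; exact absurd hx hx0
  · rw [if_neg hij]
    refine Eq.symm (Finset.sum_eq_zero fun x hx => Finset.sum_eq_zero fun y hy => ?_)
    have hx' : x.1 + x.2 = e 0 := Finset.HasAntidiagonal.mem_antidiagonal.mp hx
    have hy' : y.1 + y.2 = e 1 := Finset.HasAntidiagonal.mem_antidiagonal.mp hy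
    rw [csubst_coeff_m2, csubst_coeff_m2]
    by_cases h1 : x.1 = y.1
    · by_cases h2 : x.2 = y.2
      · exact absurd (by omega : e 0 = e 1) hij
      · rw [if_neg (fun h => h2 h), mul_zero]
    · rw [if_neg h1, zero_mul]

lemma csubst_zero : csubst 0 = 0 := by
  ext e; rw [csubst_coeff]; simp

lemma csubst_add (a b : PowerSeries ℂ) : csubst (a + b) = csubst a + csubst b := by
  ext e; rw [map_add, csubst_coeff, csubst_coeff, csubst_coeff]
  split_ifs <;> simp

lemma csubst_one : csubst 1 = 1 := by
  ext e
  rw [csubst_coeff, MvPowerSeries.coeff_one]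
  by_cases h0 : e = 0
  · subst h0; simp
  · have : ¬ (e 0 = 0 ∧ e 1 = 0) := by
      intro ⟨h1, h2⟩
      exact h0 (by rw [eq_m2 e, h1, h2, m2_zero])
    rw [if_neg h0]
    by_cases hij : e 0 = e 1
    · rw [if_pos hij, PowerSeries.coeff_one, if_neg (by omega)]
    · rw [if_neg hij]

def csubstR : PowerSeries ℂ →+* R2 where
  toFun := csubst
  map_one' := csubst_one
  map_mul' := csubst_mul
  map_zero' := csubst_zero
  map_add' := csubst_add

lemma csubst_X : csubst PowerSeries.X = pp * qq := by
  ext e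
  rw [csubst_coeff, ppqq_eq, MvPowerSeries.coeff_monomial]
  by_cases hij : e 0 = e 1
  · rw [if_pos hij, PowerSeries.coeff_X]
    by_cases h1 : e 0 = 1
    · rw [if_pos h1, if_pos (by rw [eq_m2 e, h1, ← hij, h1])]
    · rw [if_neg h1, if_neg fun h => h1 (by rw [eq_m2 e] at h; exact (m2_inj.mp h).1)]
  · rw [if_neg hij, if_neg fun h => ?_, eq_comm]
    rw [eq_m2 e] at h
    obtain ⟨h1, h2⟩ := m2_inj.mp h
    omega

lemma csubst_constantCoeff (c : PowerSeries ℂ) :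
    MvPowerSeries.constantCoeff (csubst c) = PowerSeries.constantCoeff c := by
  rw [← MvPowerSeries.coeff_zero_eq_constantCoeff, csubst_coeff]
  simp [PowerSeries.coeff_zero_eq_constantCoeff]

lemma csubst_smul (r : ℂ) (c : PowerSeries ℂ) : csubst (r • c) = r • csubst c := by
  ext e
  rw [csubst_coeff]
  simp only [map_smul, smul_eq_mul, MvPowerSeries.coeff_smul]
  rw [csubst_coeff]
  split_ifs <;> simp




def Sv (v : PowerSeries ℂ) (F : R2) : R2 := fun e =>
  ∑ k ∈ range (min (e 0) (e 1) + 1),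
    PowerSeries.coeff k (v ^ (e 0 - k)) * coeff (m2 (e 0 - k) (e 1 - k)) F

lemma Sv_coeff (v : PowerSeries ℂ) (F : R2) (e : Fin 2 →₀ ℕ) :
    coeff e (Sv v F) = ∑ k ∈ range (min (e 0) (e 1) + 1),
      PowerSeries.coeff k (v ^ (e 0 - k)) * coeff (m2 (e 0 - k) (e 1 - k)) F := rfl

lemma Sv_add (v : PowerSeries ℂ) (F G : R2) : Sv v (F + G) = Sv v F + Sv v G := by
  ext e
  rw [map_add, Sv_coeff, Sv_coeff, Sv_coeff, ← Finset.sum_add_distrib]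
  exact Finset.sum_congr rfl fun k _ => by rw [map_add, mul_add]

lemma Sv_smul (v : PowerSeries ℂ) (r : ℂ) (F : R2) : Sv v (r • F) = r • Sv v F := by
  ext e
  rw [MvPowerSeries.coeff_smul, Sv_coeff, Sv_coeff, Finset.mul_sum]
  exact Finset.sum_congr rfl fun k _ => by
    rw [MvPowerSeries.coeff_smul]; ring

lemma Sv_sub (v : PowerSeries ℂ) (F G : R2) : Sv v (F - G) = Sv v F - Sv v G := by
  have h := Sv_add v (F - G) G
  rw [sub_add_cancel] at h
  rw [h]; ring

lemma Sv_inI (v : PowerSeries ℂ) {n : ℕ} {F : R2} (hF : inI n F) : inI n (Sv v F) := by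
  intro e he
  rw [Sv_coeff]
  refine Finset.sum_eq_zero fun k hk => ?_
  rw [hF _ (by simp only [m2_apply0, m2_apply1]; omega), mul_zero]

lemma Sv_monomial (v : PowerSeries ℂ) (a b : ℕ) (c : ℂ) :
    Sv v (monomial (m2 a b) c) = c • (pp ^ a * qq ^ b * csubst (v ^ a)) := by
  ext e
  rw [Sv_coeff, MvPowerSeries.coeff_smul, pp_pow_qq_pow, coeff_monomial_mul]
  by_cases hcond : a ≤ e 0 ∧ b ≤ e 1 ∧ e 0 - a = e 1 - b
  · obtain ⟨ha, hb, hd⟩ := hcond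
    rw [if_pos (m2_le_iff.mpr ⟨ha, hb⟩), one_mul, csubst_coeff, sub_m2_apply0, sub_m2_apply1,
      if_pos hd]
    rw [Finset.sum_eq_single (e 0 - a)]
    · rw [MvPowerSeries.coeff_monomial, if_pos (by rw [m2_inj]; omega : m2 (e 0 - (e 0 - a)) (e 1 - (e 0 - a)) = m2 a b)]
      rw [show e 0 - (e 0 - a) = a by omega]
      ring
    · intro k hk hne
      rw [MvPowerSeries.coeff_monomial, if_neg, mul_zero]
      rw [m2_inj]
      simp only [Finset.mem_range] at hk
      omega
    · intro h
      simp only [Finset.mem_range] at h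
      omega
  · have hrhs : (if m2 a b ≤ e then (1:ℂ) * coeff (e - m2 a b) (csubst (v ^ a)) else 0) = 0 := by
      by_cases hle : m2 a b ≤ e
      · have h1 := (m2_le_iff.mp hle).1
        have h2 := (m2_le_iff.mp hle).2
        rw [if_pos hle, one_mul, csubst_coeff, sub_m2_apply0, sub_m2_apply1, if_neg (by omega)]
      · rw [if_neg hle]
    rw [hrhs, mul_zero]
    refine Finset.sum_eq_zero fun k hk => ?_
    simp only [Finset.mem_range] at hk
    rw [MvPowerSeries.coeff_monomial, if_neg, mul_zero]
    rw [m2_inj]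
    omega



def truncN (N : ℕ) (F : R2) : R2 :=
  ∑ ab ∈ range N ×ˢ range N, monomial (m2 ab.1 ab.2) (coeff (m2 ab.1 ab.2) F)

lemma truncN_coeff (N : ℕ) (F : R2) (e : Fin 2 →₀ ℕ) :
    coeff e (truncN N F) = if e 0 < N ∧ e 1 < N then coeff e F else 0 := by
  rw [truncN, map_sum]
  by_cases h : e 0 < N ∧ e 1 < N
  · rw [if_pos h, Finset.sum_eq_single (e 0, e 1)]
    · rw [MvPowerSeries.coeff_monomial, if_pos (eq_m2 e), ← eq_m2 e]
    · intro ab _ hne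
      rw [MvPowerSeries.coeff_monomial, if_neg]
      intro hh
      have h1 : e 0 = ab.1 := by rw [hh]; simp
      have h2 : e 1 = ab.2 := by rw [hh]; simp
      exact hne (Prod.ext h1.symm h2.symm)
    · intro hmem
      exact absurd (by simp only [Finset.mem_product, Finset.mem_range]; exact h) hmem
  · rw [if_neg h]
    refine Finset.sum_eq_zero fun ab hab => ?_
    simp only [Finset.mem_product, Finset.mem_range] at hab
    rw [MvPowerSeries.coeff_monomial, if_neg]
    intro hh
    have h1 : e 0 = ab.1 := by rw [hh]; simp
    have h2 : e 1 = ab.2 := by rw [hh]; simp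
    omega

lemma sub_truncN_inI (N : ℕ) (F : R2) : inI N (F - truncN N F) := by
  intro e he
  rw [map_sub, truncN_coeff, if_pos (by omega), sub_self]

lemma Sv_sum {α : Type*} (v : PowerSeries ℂ) (s : Finset α) (f : α → R2) :
    Sv v (∑ x ∈ s, f x) = ∑ x ∈ s, Sv v (f x) :=
  map_sum (AddMonoidHom.mk' (Sv v) (Sv_add v)) f s

lemma Sv_mono_mul_mono (v : PowerSeries ℂ) (a b c d : ℕ) (x y : ℂ) :
    Sv v (monomial (m2 a b) x * monomial (m2 c d) y)
      = Sv v (monomial (m2 a b) x) * Sv v (monomial (m2 c d) y) := by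
  rw [monomial_mul_monomial, m2_add, Sv_monomial, Sv_monomial, Sv_monomial]
  rw [smul_eq_C_mul, smul_eq_C_mul, smul_eq_C_mul, map_mul]
  rw [pow_add, pow_add, pow_add, csubst_mul]
  ring

lemma Sv_mul (v : PowerSeries ℂ) (F G : R2) : Sv v (F * G) = Sv v F * Sv v G := by
  ext e
  set N := e 0 + e 1 + 1 with hN
  have hdeg : e 0 + e 1 < N := by omega
  have hF : inI N (F - truncN N F) := sub_truncN_inI N F
  have hG : inI N (G - truncN N G) := sub_truncN_inI N G
  have hkey : Sv v (truncN N F * truncN N G) = Sv v (truncN N F) * Sv v (truncN N G) := by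
    rw [truncN, truncN, Finset.sum_mul_sum, Sv_sum]
    simp only [Sv_sum, Sv_mono_mul_mono]
    rw [← Finset.sum_mul_sum]
  have h1 : coeff e (Sv v (F * G)) = coeff e (Sv v (truncN N F * truncN N G)) := by
    have hd : inI N (F * G - truncN N F * truncN N G) := by
      have hrw : F * G - truncN N F * truncN N G
          = F * (G - truncN N G) + (F - truncN N F) * truncN N G := by ring
      rw [hrw]
      exact inI_add (inI_mul_right _ hG) (inI_mul_left hF _)
    have h := Sv_inI v hd e hdeg
    rw [Sv_sub, map_sub] at h
    exact sub_eq_zero.mp h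
  have h2 : coeff e (Sv v F * Sv v G) = coeff e (Sv v (truncN N F) * Sv v (truncN N G)) := by
    have hd : inI N (Sv v F * Sv v G - Sv v (truncN N F) * Sv v (truncN N G)) := by
      have hrw : Sv v F * Sv v G - Sv v (truncN N F) * Sv v (truncN N G)
          = Sv v F * (Sv v G - Sv v (truncN N G)) + (Sv v F - Sv v (truncN N F)) * Sv v (truncN N G) := by
        ring
      rw [hrw, ← Sv_sub, ← Sv_sub]
      exact inI_add (inI_mul_right _ (Sv_inI v hG)) (inI_mul_left (Sv_inI v hF) _)
    have h := hd e hdeg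
    rw [map_sub] at h
    exact sub_eq_zero.mp h
  rw [h1, h2, hkey]

lemma Sv_zero (v : PowerSeries ℂ) : Sv v 0 = 0 := by
  ext e; rw [Sv_coeff]
  simp

lemma Sv_one (v : PowerSeries ℂ) : Sv v 1 = 1 := by
  have h := Sv_monomial v 0 0 1
  rw [m2_zero, monomial_zero_one] at h
  rw [h]
  simp [csubst_one]

lemma Sv_C (v : PowerSeries ℂ) (c : ℂ) : Sv v (C c) = C c := by
  have h := Sv_monomial v 0 0 c
  rw [m2_zero, monomial_zero_eq_C_apply] at h
  rw [h]
  simp only [pow_zero, one_mul, csubst_one, mul_one]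
  rw [smul_eq_C_mul, mul_one]

def SvAlg (v : PowerSeries ℂ) : R2 →ₐ[ℂ] R2 where
  toFun := Sv v
  map_one' := Sv_one v
  map_mul' := Sv_mul v
  map_zero' := Sv_zero v
  map_add' := Sv_add v
  commutes' := fun r => by
    rw [MvPowerSeries.algebraMap_apply]
    simp only [Algebra.algebraMap_self, RingHom.id_apply]
    exact Sv_C v r

lemma Sv_pp (v : PowerSeries ℂ) : Sv v pp = pp * csubst v := by
  rw [pp_eq, Sv_monomial, one_smul, pow_one, pow_zero, mul_one, pow_one, ← pp_eq]

lemma Sv_qq (v : PowerSeries ℂ) : Sv v qq = qq := by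
  rw [qq_eq, Sv_monomial, one_smul, pow_zero, pow_one, one_mul, pow_zero, csubst_one, mul_one, ← qq_eq]

def acomp (v c : PowerSeries ℂ) : PowerSeries ℂ :=
  PowerSeries.mk fun i => ∑ mr ∈ range (i+1),
    PowerSeries.coeff mr c * PowerSeries.coeff (i - mr) (v ^ mr)

lemma Sv_csubst (v c : PowerSeries ℂ) : Sv v (csubst c) = csubst (acomp v c) := by
  ext e
  rw [Sv_coeff, csubst_coeff]
  by_cases hij : e 0 = e 1
  · rw [if_pos hij, acomp, PowerSeries.coeff_mk]
    rw [show min (e 0) (e 1) = e 0 by omega, ← hij]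
    calc ∑ k ∈ range (e 0 + 1), PowerSeries.coeff k (v ^ (e 0 - k)) * coeff (m2 (e 0 - k) (e 0 - k)) (csubst c)
        = ∑ k ∈ range (e 0 + 1), PowerSeries.coeff (e 0 - k) c * PowerSeries.coeff (e 0 - (e 0 - k)) (v ^ (e 0 - k)) := by
          refine Finset.sum_congr rfl fun k hk => ?_
          simp only [Finset.mem_range] at hk
          rw [csubst_coeff_m2, if_pos rfl, show e 0 - (e 0 - k) = k by omega]
          ring
      _ = ∑ mr ∈ range (e 0 + 1), PowerSeries.coeff mr c * PowerSeries.coeff (e 0 - mr) (v ^ mr) := by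
          have h := Finset.sum_range_reflect
            (fun mr => PowerSeries.coeff mr c * PowerSeries.coeff (e 0 - mr) (v ^ mr)) (e 0 + 1)
          simpa using h
  · rw [if_neg hij]
    refine Finset.sum_eq_zero fun k hk => ?_
    simp only [Finset.mem_range] at hk
    rw [csubst_coeff_m2, if_neg (by omega), mul_zero]

lemma acomp_coeff_zero (v c : PowerSeries ℂ) :
    PowerSeries.coeff 0 (acomp v c) = PowerSeries.coeff 0 c := by
  rw [acomp, PowerSeries.coeff_mk, Finset.sum_range_one]
  simp




lemma eq_zero_of_forall_mem_pow {F : R2} (h : ∀ n, F ∈ Ipq ^ n) : F = 0 := by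
  ext e
  have h2 := inI_of_mem_pow (e 0 + e 1 + 1) F (h _) e (by omega)
  simpa using h2

lemma Sv_cont (v : PowerSeries ℂ) : AdicContinuous (Sv v) := fun n =>
  ⟨n, fun F hF => mem_pow_of_inI (Sv_inI v (inI_of_mem_pow n F hF))⟩

lemma cont_comp {f g : R2 → R2} (hf : AdicContinuous f) (hg : AdicContinuous g) :
    AdicContinuous (fun F => f (g F)) := by
  intro n
  obtain ⟨k1, h1⟩ := hf n
  obtain ⟨k2, h2⟩ := hg k1
  exact ⟨k2, fun F hF => h1 _ (h2 _ hF)⟩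

lemma monomial_eq_smul (d : Fin 2 →₀ ℕ) (c : ℂ) :
    monomial d c = c • monomial d 1 := by
  rw [← map_smul, smul_eq_mul, mul_one]

lemma hom_ext {φ₁ φ₂ : R2 →ₐ[ℂ] R2} (h₁ : AdicContinuous φ₁) (h₂ : AdicContinuous φ₂)
    (hp : φ₁ pp = φ₂ pp) (hq : φ₁ qq = φ₂ qq) : ∀ F, φ₁ F = φ₂ F := by
  intro F
  have key : ∀ n, φ₁ F - φ₂ F ∈ Ipq ^ n := by
    intro n
    obtain ⟨k1, hm1⟩ := h₁ n
    obtain ⟨k2, hm2⟩ := h₂ n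
    set N := max k1 k2 with hNdef
    have htr : φ₁ (truncN N F) = φ₂ (truncN N F) := by
      rw [truncN, map_sum, map_sum]
      refine Finset.sum_congr rfl fun ab _ => ?_
      rw [monomial_eq_smul, ← pp_pow_qq_pow, map_smul, map_smul, map_mul, map_mul,
        map_pow, map_pow, map_pow, map_pow, hp, hq]
    have htail : F - truncN N F ∈ Ipq ^ N := mem_pow_of_inI (sub_truncN_inI N F)
    have ha : φ₁ (F - truncN N F) ∈ Ipq ^ n :=
      hm1 _ (Ideal.pow_le_pow_right (le_max_left _ _) htail)
    have hb : φ₂ (F - truncN N F) ∈ Ipq ^ n :=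
      hm2 _ (Ideal.pow_le_pow_right (le_max_right _ _) htail)
    have hrw : φ₁ F - φ₂ F = φ₁ (F - truncN N F) - φ₂ (F - truncN N F) := by
      rw [map_sub, map_sub, htr]; ring
    rw [hrw]
    exact Ideal.sub_mem _ ha hb
  exact sub_eq_zero.mp (eq_zero_of_forall_mem_pow key)

lemma fix_csubst (φ : R2 ≃ₐ[ℂ] R2) (hc : AdicContinuous φ) (hpq : φ (pp * qq) = pp * qq)
    (c : PowerSeries ℂ) : φ (csubst c) = csubst c := by
  have key : ∀ n, φ (csubst c) - csubst c ∈ Ipq ^ n := by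
    intro n
    obtain ⟨k1, hm1⟩ := hc n
    set N := max k1 n with hNdef
    set P : R2 := ∑ k ∈ range N, (PowerSeries.coeff k c) • (pp * qq) ^ k with hP
    have hφP : φ P = P := by
      rw [hP, map_sum]
      refine Finset.sum_congr rfl fun k _ => ?_
      rw [map_smul, map_pow, hpq]
    have hcoeffP : ∀ e : Fin 2 →₀ ℕ, coeff e P
        = ∑ k ∈ range N, (PowerSeries.coeff k c) * (if e = m2 k k then 1 else 0) := by
      intro e
      rw [hP, map_sum]
      refine Finset.sum_congr rfl fun k _ => ?_
      rw [MvPowerSeries.coeff_smul, ppqq_pow, MvPowerSeries.coeff_monomial]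
    have hPc : inI N (csubst c - P) := by
      intro e he
      rw [map_sub, hcoeffP e, csubst_coeff]
      by_cases hij : e 0 = e 1
      · rw [if_pos hij, Finset.sum_eq_single (e 0)]
        · rw [if_pos ((eq_m2 e).trans (by rw [hij])), mul_one, sub_self]
        · intro k _ hne
          rw [if_neg, mul_zero]
          intro h
          have : e 0 = k := by rw [h]; simp
          exact hne this.symm
        · intro habs
          simp only [Finset.mem_range] at habs
          omega
      · rw [if_neg hij, Finset.sum_eq_zero, sub_zero]
        intro k _
        rw [if_neg, mul_zero]
        intro h
        have h0 : e 0 = k := by rw [h]; simp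
        have h1 : e 1 = k := by rw [h]; simp
        omega
    have hdiff : csubst c - P ∈ Ipq ^ N := mem_pow_of_inI hPc
    have ha : φ (csubst c - P) ∈ Ipq ^ n :=
      hm1 _ (Ideal.pow_le_pow_right (le_max_left _ _) hdiff)
    have hb : csubst c - P ∈ Ipq ^ n := Ideal.pow_le_pow_right (le_max_right _ _) hdiff
    have hrw : φ (csubst c) - csubst c = φ (csubst c - P) - (csubst c - P) := by
      rw [map_sub, hφP]; ring
    rw [hrw]
    exact Ideal.sub_mem _ ha hb
  exact sub_eq_zero.mp (eq_zero_of_forall_mem_pow key)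




def wc (v : PowerSeries ℂ) : ℕ → ℂ
  | n => (PowerSeries.coeff 0 v ^ (n+1))⁻¹ *
      ((if n = 0 then 1 else 0)
        - ∑ i ∈ (range n).attach,
            PowerSeries.coeff ((i:ℕ)+1) v *
              ∑ mr ∈ (range (n-1-(i:ℕ)+1)).attach,
                wc v mr * PowerSeries.coeff (n-1-(i:ℕ)-(mr:ℕ)) (v ^ (mr:ℕ))
        - PowerSeries.coeff 0 v *
            ∑ mr ∈ (range n).attach,
              wc v mr * PowerSeries.coeff (n-(mr:ℕ)) (v ^ (mr:ℕ)))
  termination_by n => n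
  decreasing_by
  · have h1 := i.2
    have h2 := mr.2
    simp only [Finset.mem_range] at h1 h2
    omega
  · have h2 := mr.2
    simp only [Finset.mem_range] at h2
    omega

lemma wc_eq (v : PowerSeries ℂ) (n : ℕ) : wc v n =
    (PowerSeries.coeff 0 v ^ (n+1))⁻¹ *
      ((if n = 0 then (1:ℂ) else 0)
        - ∑ i ∈ range n,
            PowerSeries.coeff (i+1) v *
              ∑ mr ∈ range (n-1-i+1),
                wc v mr * PowerSeries.coeff (n-1-i-mr) (v ^ mr)
        - PowerSeries.coeff 0 v *
            ∑ mr ∈ range n,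
              wc v mr * PowerSeries.coeff (n-mr) (v ^ mr)) := by
  rw [wc]
  congr 2
  · congr 1
    rw [← Finset.sum_attach (range n)]
    refine Finset.sum_congr rfl fun i _ => ?_
    congr 1
    rw [← Finset.sum_attach (range (n-1-(i:ℕ)+1))]
  · congr 1
    rw [← Finset.sum_attach (range n)]

lemma wc_spec (v : PowerSeries ℂ) (hv : PowerSeries.constantCoeff v ≠ 0) :
    v * acomp v (PowerSeries.mk (wc v)) = 1 := by
  have hv0 : PowerSeries.coeff 0 v ≠ 0 := by
    rwa [PowerSeries.coeff_zero_eq_constantCoeff]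
  ext n
  rw [PowerSeries.coeff_mul]
  rw [Finset.Nat.sum_antidiagonal_eq_sum_range_succ
    (fun a b => PowerSeries.coeff a v * PowerSeries.coeff b (acomp v (PowerSeries.mk (wc v)))) n]
  rw [Finset.sum_range_succ']
  have hB : ∀ j, PowerSeries.coeff j (acomp v (PowerSeries.mk (wc v)))
      = ∑ mr ∈ range (j+1), wc v mr * PowerSeries.coeff (j-mr) (v ^ mr) := by
    intro j
    rw [acomp, PowerSeries.coeff_mk]
    exact Finset.sum_congr rfl fun mr _ => by rw [PowerSeries.coeff_mk]
  have hBn : PowerSeries.coeff n (acomp v (PowerSeries.mk (wc v)))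
      = (∑ mr ∈ range n, wc v mr * PowerSeries.coeff (n-mr) (v ^ mr))
        + wc v n * PowerSeries.coeff 0 v ^ n := by
    rw [hB, Finset.sum_range_succ, Nat.sub_self]
    congr 2
    rw [PowerSeries.coeff_zero_eq_constantCoeff, map_pow]
  have hiter : ∀ i ∈ range n,
      PowerSeries.coeff (i+1) v * PowerSeries.coeff (n-(i+1)) (acomp v (PowerSeries.mk (wc v)))
      = PowerSeries.coeff (i+1) v *
          ∑ mr ∈ range (n-1-i+1), wc v mr * PowerSeries.coeff (n-1-i-mr) (v ^ mr) := by
    intro i hi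
    rw [hB, show n - (i+1) = n-1-i by omega]
  rw [Finset.sum_congr rfl hiter, Nat.sub_zero, hBn, PowerSeries.coeff_one]
  rw [wc_eq]
  simp only [PowerSeries.coeff_zero_eq_constantCoeff]
  have key : ∀ (a X A B : ℂ), a ≠ 0 →
      A + a * (B + (a^(n+1))⁻¹ * (X - A - a*B) * a^n) = X := by
    intro a X A B ha
    field_simp
    ring
  exact key _ _ _ _ hv



def Eexp : PowerSeries ℂ := PowerSeries.mk fun n => ((n.factorial : ℂ))⁻¹
def Eexp' : PowerSeries ℂ := PowerSeries.mk fun n => (-1)^n * ((n.factorial : ℂ))⁻¹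
def uu : PowerSeries ℂ := PowerSeries.mk fun n => -(((n+1).factorial : ℂ))⁻¹

lemma X_mul_uu : PowerSeries.X * uu = 1 - Eexp := by
  ext n
  cases n with
  | zero =>
    rw [PowerSeries.coeff_zero_X_mul, map_sub, PowerSeries.coeff_one, Eexp, PowerSeries.coeff_mk]
    simp
  | succ k =>
    rw [PowerSeries.coeff_succ_X_mul, map_sub, PowerSeries.coeff_one, Eexp, PowerSeries.coeff_mk,
      uu, PowerSeries.coeff_mk]
    simp

lemma constantCoeff_ppqq : MvPowerSeries.constantCoeff (pp * qq) = 0 := by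
  rw [map_mul]
  simp [pp, qq]

lemma fexp_ppqq : fexp (pp * qq) = csubst Eexp := by
  rw [fexp, constantCoeff_ppqq, Complex.exp_zero, map_zero, sub_zero, one_smul]
  ext e
  have hL : coeff e (fexp0 (pp * qq)) = ∑ k ∈ Finset.range (e 0 + e 1 + 1),
      ((Nat.factorial k : ℂ))⁻¹ * MvPowerSeries.coeff e ((pp*qq) ^ k) := rfl
  rw [hL, csubst_coeff]
  have hterm : ∀ k, MvPowerSeries.coeff e ((pp*qq) ^ k) = if e = m2 k k then (1:ℂ) else 0 := by
    intro k; rw [ppqq_pow, MvPowerSeries.coeff_monomial]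
  by_cases hij : e 0 = e 1
  · rw [if_pos hij, Finset.sum_eq_single (e 0)]
    · rw [hterm, if_pos ((eq_m2 e).trans (by rw [hij])), mul_one, Eexp, PowerSeries.coeff_mk]
    · intro k _ hne
      rw [hterm, if_neg, mul_zero]
      intro h
      refine hne (Eq.symm ?_)
      rw [h]; simp
    · intro habs
      simp only [Finset.mem_range] at habs
      omega
  · rw [if_neg hij]
    refine Finset.sum_eq_zero fun k _ => ?_
    rw [hterm, if_neg, mul_zero]
    intro h
    have h0 : e 0 = k := by rw [h]; simp
    have h1 : e 1 = k := by rw [h]; simp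
    omega

lemma fexp_neg_ppqq : fexp (-(pp * qq)) = csubst Eexp' := by
  rw [fexp, map_neg, constantCoeff_ppqq, neg_zero, Complex.exp_zero, map_zero, sub_zero, one_smul]
  ext e
  have hL : coeff e (fexp0 (-(pp * qq))) = ∑ k ∈ Finset.range (e 0 + e 1 + 1),
      ((Nat.factorial k : ℂ))⁻¹ * MvPowerSeries.coeff e ((-(pp*qq)) ^ k) := rfl
  rw [hL, csubst_coeff]
  have hterm : ∀ k, MvPowerSeries.coeff e ((-(pp*qq)) ^ k)
      = (-1)^k * (if e = m2 k k then (1:ℂ) else 0) := by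
    intro k
    rw [show -(pp*qq) = (-1:ℂ) • (pp*qq) by rw [neg_smul, one_smul], smul_pow,
      MvPowerSeries.coeff_smul, ppqq_pow, MvPowerSeries.coeff_monomial]
  by_cases hij : e 0 = e 1
  · rw [if_pos hij, Finset.sum_eq_single (e 0)]
    · rw [hterm, if_pos ((eq_m2 e).trans (by rw [hij])), Eexp', PowerSeries.coeff_mk]
      ring
    · intro k _ hne
      rw [hterm, if_neg, mul_zero, mul_zero]
      intro h
      refine hne (Eq.symm ?_)
      rw [h]; simp
    · intro habs
      simp only [Finset.mem_range] at habs
      omega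
  · rw [if_neg hij]
    refine Finset.sum_eq_zero fun k _ => ?_
    rw [hterm, if_neg, mul_zero, mul_zero]
    intro h
    have h0 : e 0 = k := by rw [h]; simp
    have h1 : e 1 = k := by rw [h]; simp
    omega

lemma Eexp_mul_Eexp' : Eexp * Eexp' = 1 := by
  ext n
  rw [PowerSeries.coeff_mul, Finset.Nat.sum_antidiagonal_eq_sum_range_succ
    (fun a b => PowerSeries.coeff a Eexp * PowerSeries.coeff b Eexp') n,
    PowerSeries.coeff_one]
  have hterm : ∀ k ∈ range (n+1),
      PowerSeries.coeff k Eexp * PowerSeries.coeff (n-k) Eexp'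
        = ((-1:ℂ)^(n-k) * (n.choose k)) * ((n.factorial : ℂ))⁻¹ := by
    intro k hk
    simp only [Finset.mem_range] at hk
    rw [Eexp, Eexp', PowerSeries.coeff_mk, PowerSeries.coeff_mk]
    have hfac : (n.choose k : ℂ) * (k.factorial : ℂ) * ((n-k).factorial : ℂ) = (n.factorial : ℂ) := by
      have := Nat.choose_mul_factorial_mul_factorial (by omega : k ≤ n)
      exact_mod_cast congrArg (fun x : ℕ => (x : ℂ)) this
    have hk0 : (k.factorial : ℂ) ≠ 0 := Nat.cast_ne_zero.mpr k.factorial_ne_zero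
    have hnk0 : ((n-k).factorial : ℂ) ≠ 0 := Nat.cast_ne_zero.mpr (n-k).factorial_ne_zero
    have hn0 : (n.factorial : ℂ) ≠ 0 := Nat.cast_ne_zero.mpr n.factorial_ne_zero
    field_simp
    rw [← hfac]
    ring
  rw [Finset.sum_congr rfl hterm, ← Finset.sum_mul]
  have hsum : ∑ k ∈ range (n+1), (-1:ℂ)^(n-k) * (n.choose k)
      = if n = 0 then 1 else 0 := by
    have hstep : ∑ k ∈ range (n+1), (-1:ℂ)^(n-k) * (n.choose k)
        = ∑ j ∈ range (n+1), (-1:ℂ)^j * (n.choose j) := by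
      refine Finset.sum_nbij' (fun k => n - k) (fun j => n - j) ?_ ?_ ?_ ?_ ?_
      · intro k hk; simp only [Finset.mem_range] at *; omega
      · intro k hk; simp only [Finset.mem_range] at *; omega
      · intro k hk; simp only [Finset.mem_range] at hk; show n - (n - k) = k; omega
      · intro k hk; simp only [Finset.mem_range] at hk; show n - (n - k) = k; omega
      · intro k hk
        simp only [Finset.mem_range] at hk
        rw [Nat.choose_symm (by omega : k ≤ n)]
    rw [hstep]
    have hint := Int.alternating_sum_range_choose (n := n)
    have hc : ((∑ i ∈ range (n+1), (-1:ℤ)^i * (n.choose i) : ℤ) : ℂ)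
        = (((if n = 0 then 1 else 0) : ℤ) : ℂ) := congrArg Int.cast hint
    push_cast [apply_ite (fun z : ℤ => (z : ℂ))] at hc
    exact hc
  rw [hsum]
  split_ifs with h
  · subst h; simp
  · rw [zero_mul]




lemma uu_const : PowerSeries.constantCoeff uu = -1 := by
  rw [← PowerSeries.coeff_zero_eq_constantCoeff, uu, PowerSeries.coeff_mk]
  simp [Nat.factorial]

lemma uu_const_ne : PowerSeries.constantCoeff uu ≠ 0 := by
  rw [uu_const]; norm_num

def ww : PowerSeries ℂ := PowerSeries.mk (wc uu)

lemma hww : uu * acomp uu ww = 1 := wc_spec uu uu_const_ne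

lemma ww_const_ne : PowerSeries.constantCoeff ww ≠ 0 := by
  intro h0
  have h := congrArg (PowerSeries.constantCoeff) hww
  rw [map_mul, map_one] at h
  have hc : PowerSeries.constantCoeff (acomp uu ww) = PowerSeries.constantCoeff ww := by
    simpa using acomp_coeff_zero uu ww
  rw [hc, h0, mul_zero] at h
  exact zero_ne_one h

def uu' : PowerSeries ℂ := PowerSeries.mk (wc ww)

lemma huu' : ww * acomp ww uu' = 1 := wc_spec ww ww_const_ne

lemma id_cont : AdicContinuous (fun F : R2 => F) := fun n => ⟨n, fun _ hF => hF⟩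

lemma Sv_comp_right_inv (v w' : PowerSeries ℂ) (h : v * acomp v w' = 1) :
    ∀ F, Sv v (Sv w' F) = F := by
  have hvals := hom_ext (φ₁ := (SvAlg v).comp (SvAlg w')) (φ₂ := AlgHom.id ℂ R2)
    (by have c1 : AdicContinuous (fun F => Sv v (Sv w' F)) := cont_comp (Sv_cont v) (Sv_cont w')
        exact c1) (by exact id_cont) ?_ ?_
  · intro F; exact hvals F
  · show Sv v (Sv w' pp) = pp
    rw [Sv_pp, Sv_mul, Sv_pp, Sv_csubst, mul_assoc, ← csubst_mul, h, csubst_one, mul_one]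
  · show Sv v (Sv w' qq) = qq
    rw [Sv_qq, Sv_qq]

lemma comp1 : ∀ F, Sv uu (Sv ww F) = F := Sv_comp_right_inv uu ww hww
lemma comp2 : ∀ F, Sv ww (Sv uu' F) = F := Sv_comp_right_inv ww uu' huu'

lemma comp3 : ∀ F, Sv ww (Sv uu F) = F := by
  have hu'u : ∀ F, Sv uu' F = Sv uu F := by
    intro F
    conv_lhs => rw [← comp1 (Sv uu' F)]
    rw [comp2 F]
  intro F
  rw [← hu'u F]
  exact comp2 F

def sigmaEq : R2 ≃ₐ[ℂ] R2 :=
  AlgEquiv.ofAlgHom (SvAlg uu) (SvAlg ww)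
    (AlgHom.ext comp1) (AlgHom.ext comp3)

lemma csubst_Eexp : csubst (1 - PowerSeries.X * uu) = csubst Eexp := by
  rw [X_mul_uu, sub_sub_cancel]

lemma one_sub_eq : (1 : R2) - pp * csubst uu * qq = csubst Eexp := by
  rw [← csubst_Eexp]
  have h : csubst (1 - PowerSeries.X * uu) = csubst 1 - csubst (PowerSeries.X * uu) := by
    have h2 := map_sub csubstR 1 (PowerSeries.X * uu)
    exact h2
  rw [h, csubst_mul, csubst_one, csubst_X]
  ring

lemma csubst_Eexp_ne : csubst Eexp ≠ 0 := by
  intro h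
  have := csubst_constantCoeff Eexp
  rw [h, map_zero] at this
  have h1 : PowerSeries.constantCoeff Eexp = 1 := by
    rw [← PowerSeries.coeff_zero_eq_constantCoeff, Eexp, PowerSeries.coeff_mk]
    simp [Nat.factorial]
  rw [h1] at this
  exact one_ne_zero this.symm


end Aux

/-- the formal automorphisms ψ : (p,q) ↦ (p·e^{pq}, q·e^{-pq}) and
m : (p,q) ↦ (p(1−pq), q(1−pq)⁻¹) of ℂ[[p,q]] are conjugate in the group of continuous
ℂ-algebra automorphisms preserving the maximal ideal: σ⁻¹ ∘ ψ ∘ σ = m for some such σ. -/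
theorem stmt11 (ψ m : R2 ≃ₐ[ℂ] R2)
    (hψc : AdicContinuous ψ) (hmc : AdicContinuous m)
    (hψp : ψ pp = pp * fexp (pp * qq)) (hψq : ψ qq = qq * fexp (-(pp * qq)))
    (hψI : ψ pp ∈ Ipq ∧ ψ qq ∈ Ipq)
    (hmp : m pp = pp * (1 - pp * qq)) (hmq : m qq = qq * (1 - pp * qq)⁻¹)
    (hmI : m pp ∈ Ipq ∧ m qq ∈ Ipq) :
    ∃ σ : R2 ≃ₐ[ℂ] R2, AdicContinuous σ ∧ σ pp ∈ Ipq ∧ σ qq ∈ Ipq ∧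
      σ⁻¹ * ψ * σ = m := by
  have hψpq : ψ (pp * qq) = pp * qq := by
    rw [map_mul, hψp, hψq, fexp_ppqq, fexp_neg_ppqq,
      show pp * csubst Eexp * (qq * csubst Eexp') = pp * qq * (csubst Eexp * csubst Eexp') by ring,
      ← csubst_mul, Eexp_mul_Eexp', csubst_one, mul_one]
  have hψcs : ∀ c, ψ (csubst c) = csubst c := fix_csubst ψ hψc hψpq
  -- the commuting identity on generators
  have hunit : (1 - pp*qq) * (1 - pp*qq)⁻¹ = 1 := by
    refine MvPowerSeries.mul_inv_cancel _ ?_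
    rw [map_sub, map_one, constantCoeff_ppqq, sub_zero]
    exact one_ne_zero
  have hSv_one_sub : Sv uu (1 - pp * qq) = csubst Eexp := by
    rw [Sv_sub, Sv_one, Sv_mul, Sv_pp, Sv_qq, one_sub_eq]
  have hZ : Sv uu ((1 - pp*qq)⁻¹) = csubst Eexp' := by
    have h1 : csubst Eexp * Sv uu ((1 - pp*qq)⁻¹) = 1 := by
      rw [← hSv_one_sub, ← Sv_mul, hunit, Sv_one]
    have h2 : csubst Eexp * csubst Eexp' = 1 := by
      rw [← csubst_mul, Eexp_mul_Eexp', csubst_one]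
    exact mul_left_cancel₀ csubst_Eexp_ne (h1.trans h2.symm)
  have hcomm : ∀ F, ψ (Sv uu F) = Sv uu (m F) := by
    refine hom_ext (φ₁ := (ψ.toAlgHom).comp (SvAlg uu)) (φ₂ := (SvAlg uu).comp (m.toAlgHom))
      (by have c1 : AdicContinuous (fun F => ψ (Sv uu F)) := cont_comp hψc (Sv_cont uu)
          exact c1)
      (by have c2 : AdicContinuous (fun F => Sv uu (m F)) := cont_comp (Sv_cont uu) hmc
          exact c2) ?_ ?_
    · show ψ (Sv uu pp) = Sv uu (m pp)
      rw [Sv_pp, map_mul, hψp, fexp_ppqq, hψcs uu, hmp, Sv_mul, Sv_pp, Sv_sub, Sv_one,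
        Sv_mul, Sv_pp, Sv_qq, one_sub_eq]
      ring
    · show ψ (Sv uu qq) = Sv uu (m qq)
      rw [Sv_qq, hψq, fexp_neg_ppqq, hmq, Sv_mul, Sv_qq, hZ]
  refine ⟨sigmaEq, Sv_cont uu, ?_, ?_, ?_⟩
  · show Sv uu pp ∈ Ipq
    rw [Sv_pp]
    exact Ideal.mul_mem_right _ _ pp_mem_Ipq
  · show Sv uu qq ∈ Ipq
    rw [Sv_qq]
    exact qq_mem_Ipq
  · refine AlgEquiv.ext fun x => ?_
    have h1 : (sigmaEq⁻¹ * ψ * sigmaEq) x = sigmaEq⁻¹ (ψ (sigmaEq x)) := rfl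
    have h2 : ψ (sigmaEq x) = sigmaEq (m x) := hcomm x
    rw [h1, h2]
    exact sigmaEq.symm_apply_apply (m x)
end
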